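/- arXiv:1707.01814 — 4 statements merged into one kernel-verified Lean document; each statement's English description precedes it below -/
import Mathlib

section
/- Every language recognized by a boolean finite automaton (BFA) is regular, i.e., for every BFA B there exists a DFA D with L(B) = L(D). -/
/-- Parsing expressions over alphabet `α`, with nonterminals named by naturals. -/
inductive PExp (α : Type) : Type
  | eps : PExp α                       -- ε
  | chr : α → PExp α                   -- terminal
  | anyc : PExp α                      -- any character `.`
  | seq : PExp α → PExp α → PExp α     -- sequence e₁ e₂
  | cho : PExp α → PExp α → PExp α     -- prioritized choice e₁ / e₂
  | star : PExp α → PExp α             -- greedy repetition e*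
  | npred : PExp α → PExp α            -- not-predicate !e
  | opt : PExp α → PExp α              -- option e?
  | apred : PExp α → PExp α            -- and-predicate &e
  | plus : PExp α → PExp α             -- one-or-more e+
  | nt : ℕ → PExp α                    -- nonterminal

variable {α : Type}

/-- Big-step PEG semantics: `Consume P e w (some y)` means `e` succeeds on input `w`
consuming the prefix `y`; `Consume P e w none` means `e` fails on `w`.
`P` gives the production rules for nonterminals. -/
inductive Consume (P : ℕ → PExp α) : PExp α → List α → Option (List α) → Prop
  | eps (w : List α) : Consume P .eps w (some [])
  | chr_ok (a : α) (w : List α) : Consume P (.chr a) (a :: w) (some [a])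
  | chr_fail_nil (a : α) : Consume P (.chr a) [] none
  | chr_fail {a b : α} (w : List α) : a ≠ b → Consume P (.chr a) (b :: w) none
  | any_ok (a : α) (w : List α) : Consume P .anyc (a :: w) (some [a])
  | any_fail : Consume P .anyc [] none
  | seq_ok {e1 e2 : PExp α} {x y w' : List α} :
      Consume P e1 (x ++ w') (some x) → Consume P e2 w' (some y) →
      Consume P (.seq e1 e2) (x ++ w') (some (x ++ y))
  | seq_fail1 {e1 e2 : PExp α} {w : List α} :
      Consume P e1 w none → Consume P (.seq e1 e2) w none
  | seq_fail2 {e1 e2 : PExp α} {x w' : List α} :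
      Consume P e1 (x ++ w') (some x) → Consume P e2 w' none →
      Consume P (.seq e1 e2) (x ++ w') none
  | cho1 {e1 e2 : PExp α} {w x : List α} :
      Consume P e1 w (some x) → Consume P (.cho e1 e2) w (some x)
  | cho2 {e1 e2 : PExp α} {w : List α} {r : Option (List α)} :
      Consume P e1 w none → Consume P e2 w r → Consume P (.cho e1 e2) w r
  | not_ok {e : PExp α} {w : List α} :
      Consume P e w none → Consume P (.npred e) w (some [])
  | not_fail {e : PExp α} {w x : List α} :
      Consume P e w (some x) → Consume P (.npred e) w none
  | star_done {e : PExp α} {w : List α} :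
      Consume P e w none → Consume P (.star e) w (some [])
  | star_step {e : PExp α} {x y w' : List α} :
      Consume P e (x ++ w') (some x) → Consume P (.star e) w' (some y) →
      Consume P (.star e) (x ++ w') (some (x ++ y))
  | opt_ok {e : PExp α} {w x : List α} :
      Consume P e w (some x) → Consume P (.opt e) w (some x)
  | opt_eps {e : PExp α} {w : List α} :
      Consume P e w none → Consume P (.opt e) w (some [])
  | and_ok {e : PExp α} {w x : List α} :
      Consume P e w (some x) → Consume P (.apred e) w (some [])
  | and_fail {e : PExp α} {w : List α} :
      Consume P e w none → Consume P (.apred e) w none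
  | plus_ok {e : PExp α} {x y w' : List α} :
      Consume P e (x ++ w') (some x) → Consume P (.star e) w' (some y) →
      Consume P (.plus e) (x ++ w') (some (x ++ y))
  | plus_fail {e : PExp α} {w : List α} :
      Consume P e w none → Consume P (.plus e) w none
  | nt {A : ℕ} {w : List α} {r : Option (List α)} :
      Consume P (P A) w r → Consume P (.nt A) w r

/-- The language of an expression: the strings on which it succeeds. -/
def PLang (P : ℕ → PExp α) (e : PExp α) : Set (List α) :=
  { x | ∃ y, Consume P e x (some y) }

/-- Nonterminal-free parsing expressions `p ::= ε | a | . | p p | p / p | p* | !p`. -/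
def NFree : PExp α → Prop
  | PExp.eps => True
  | PExp.chr _ => True
  | PExp.anyc => True
  | PExp.seq e1 e2 => NFree e1 ∧ NFree e2
  | PExp.cho e1 e2 => NFree e1 ∧ NFree e2
  | PExp.star e => NFree e
  | PExp.npred e => NFree e
  | _ => False

/-- Linear parsing expressions `e ::= p | p A | p e | e/e | !e e`. -/
inductive Linear : PExp α → Prop
  | base {p : PExp α} : NFree p → Linear p
  | pnt {p : PExp α} (A : ℕ) : NFree p → Linear (PExp.seq p (PExp.nt A))
  | pseq {p e : PExp α} : NFree p → Linear e → Linear (PExp.seq p e)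
  | cho {e1 e2 : PExp α} : Linear e1 → Linear e2 → Linear (PExp.cho e1 e2)
  | notseq {e1 e2 : PExp α} : Linear e1 → Linear e2 → Linear (PExp.seq (PExp.npred e1) e2)

/-- All nonterminals occurring in the expression have index `< n`. -/
def NTBound (n : ℕ) : PExp α → Prop
  | PExp.nt A => A < n
  | PExp.seq e1 e2 => NTBound n e1 ∧ NTBound n e2
  | PExp.cho e1 e2 => NTBound n e1 ∧ NTBound n e2
  | PExp.star e => NTBound n e
  | PExp.npred e => NTBound n e
  | PExp.opt e => NTBound n e
  | PExp.apred e => NTBound n e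
  | PExp.plus e => NTBound n e
  | _ => True

/-- A PEG: finitely many nonterminals `0, …, n-1`, production rules, start expression. -/
structure PEGG (α : Type) where
  n : ℕ
  P : ℕ → PExp α
  start : PExp α

/-- A PEG is an LPEG iff its start expression and the bodies of its productions are
linear parsing expressions (and all nonterminal references stay in range). -/
def PEGG.IsLPEG (G : PEGG α) : Prop :=
  Linear G.start ∧ NTBound G.n G.start ∧
    ∀ A < G.n, Linear (G.P A) ∧ NTBound G.n (G.P A)

def PEGG.Lang (G : PEGG α) : Set (List α) := PLang G.P G.start

/-- Linear parsing expression grammars. -/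
structure LPEG (α : Type) where
  toPEGG : PEGG α
  isLPEG : toPEGG.IsLPEG

def LPEG.Lang (G : LPEG α) : Set (List α) := G.toPEGG.Lang

/-- Boolean finite automata.  Boolean functions over the states `Q` are represented as
`(Q → Bool) → Bool`. -/
structure BFA (α : Type) where
  Q : Type
  [fintypeQ : Fintype Q]
  [decEqQ : DecidableEq Q]
  δ : Q → α → (Q → Bool) → Bool
  f0 : (Q → Bool) → Bool
  F : Finset Q

attribute [instance] BFA.fintypeQ BFA.decEqQ

/-- Extended transition function of a BFA on boolean functions:
`run f ε = f`, `run f (a·w) = run (f(δ(q₁,a),…,δ(qₙ,a))) w`. -/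
def BFA.run (B : BFA α) : ((B.Q → Bool) → Bool) → List α → ((B.Q → Bool) → Bool)
  | f, [] => f
  | f, a :: w => B.run (fun v => f (fun q => B.δ q a v)) w

/-- Acceptance: evaluate the transited boolean function at the characteristic vector of `F`. -/
def BFA.Accepts (B : BFA α) (x : List α) : Prop :=
  B.run B.f0 x (fun q => decide (q ∈ B.F)) = true

/-- Regular expressions (without ∅, as in the paper). -/
inductive Regex (α : Type) : Type
  | eps : Regex α
  | chr : α → Regex α
  | cat : Regex α → Regex α → Regex α
  | alt : Regex α → Regex α → Regex α
  | star : Regex α → Regex α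

/-- Standard language of a regular expression. -/
def Regex.lang : Regex α → Language α
  | .eps => 1
  | .chr a => {[a]}
  | .cat r1 r2 => r1.lang * r2.lang
  | .alt r1 r2 => r1.lang + r2.lang
  | .star r => KStar.kstar r.lang

/-- The continuation-based translation Π of regular expressions into PEGs
(Medeiros et al.).  A bare nonterminal `A` is written as the linear expression `ε A`. -/
def pitr : Regex α → PEGG α → PEGG α
  | .eps, G => G
  | .chr a, G => ⟨G.n, G.P, PExp.seq (PExp.chr a) G.start⟩
  | .cat r1 r2, G => pitr r1 (pitr r2 G)
  | .alt r1 r2, G =>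
      let G1 := pitr r1 G
      let G2 := pitr r2 ⟨G1.n, G1.P, G.start⟩
      ⟨G2.n, G2.P, PExp.cho G1.start G2.start⟩
  | .star r, G =>
      let G1 := pitr r ⟨G.n + 1, G.P, PExp.seq PExp.eps (PExp.nt G.n)⟩
      ⟨G1.n, Function.update G1.P G.n (PExp.cho G1.start G.start),
        PExp.seq PExp.eps (PExp.nt G.n)⟩

/-- every language recognized by a BFA is regular: there is a DFA with
the same language. -/
theorem bfa_to_dfa [Fintype α] (B : BFA α) :
    ∃ (σ : Type) (_ : Fintype σ) (D : DFA α σ),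
      { x : List α | B.Accepts x } = D.accepts := by
  refine ⟨(B.Q → Bool) → Bool, inferInstance,
    ⟨fun f a => fun v => f (fun q => B.δ q a v), B.f0,
      {f | f (fun q => decide (q ∈ B.F)) = true}⟩, ?_⟩
  have key : ∀ (w : List α) (f : (B.Q → Bool) → Bool),
      B.run f w = (DFA.mk (fun f a => fun v => f (fun q => B.δ q a v)) B.f0
        {f | f (fun q => decide (q ∈ B.F)) = true} : DFA α _).evalFrom f w := by
    intro w
    induction w with
    | nil => intro f; rfl
    | cons a w ih => intro f; simpa [BFA.run, DFA.evalFrom] using ih _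
  ext x
  simp only [Set.mem_setOf_eq, BFA.Accepts, DFA.mem_accepts, key]
  rfl
end

section
/- For every DFA D there exists an LPEG G such that L(D) = L(G). -/
variable {α : Type}

section DFAtoLPEG

open Classical

variable [Fintype α] {σ : Type} [Fintype σ]

/-- Body of the production for state `q`: try each letter `a` (consume it and jump
to the nonterminal of `δ(q,a)`), else succeed at end of input iff `q` is accepting. -/
noncomputable def bodyD (D : DFA α σ) (enc : σ → ℕ) (q : σ) : PExp α :=
  (Finset.univ : Finset α).toList.foldr
    (fun a e => PExp.cho (PExp.seq (PExp.chr a) (PExp.nt (enc (D.step q a)))) e)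
    (if q ∈ D.accept then PExp.npred PExp.anyc else PExp.npred PExp.eps)

lemma chr_inv {P : ℕ → PExp α} {a : α} {s x : List α}
    (h : Consume P (.chr a) s (some x)) : x = [a] ∧ ∃ t, s = a :: t := by
  cases h with
  | chr_ok => exact ⟨rfl, _, rfl⟩

lemma eps_inv {P : ℕ → PExp α} {s x : List α}
    (h : Consume P .eps s (some x)) : x = [] := by
  cases h; rfl

lemma fold_inv {P : ℕ → PExp α} (f : α → PExp α) :
    ∀ (l : List α) (base : PExp α) (w y : List α),
      Consume P (l.foldr (fun a e => PExp.cho (f a) e) base) w (some y) →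
      (∃ a ∈ l, Consume P (f a) w (some y)) ∨ Consume P base w (some y) := by
  intro l
  induction l with
  | nil => intro base w y h; exact Or.inr h
  | cons b t ih =>
    intro base w y h
    cases h with
    | cho1 h1 => exact Or.inl ⟨b, List.mem_cons_self, h1⟩
    | cho2 _ h2 =>
      rcases ih base w y h2 with ⟨a, ha, h⟩ | h
      · exact Or.inl ⟨a, List.mem_cons_of_mem _ ha, h⟩
      · exact Or.inr h

lemma fold_nil_succ {P : ℕ → PExp α} (g : α → PExp α) :
    ∀ (l : List α) (base : PExp α) (y : List α),
      Consume P base [] (some y) →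
      Consume P (l.foldr (fun a e => PExp.cho (PExp.seq (PExp.chr a) (g a)) e) base)
        [] (some y) := by
  intro l
  induction l with
  | nil => intro base y h; exact h
  | cons b t ih =>
    intro base y h
    exact Consume.cho2 (Consume.seq_fail1 (Consume.chr_fail_nil b)) (ih base y h)

lemma fold_cons_succ {P : ℕ → PExp α} (g : α → PExp α) {a : α} :
    ∀ (l : List α) (base : PExp α) (w y : List α), a ∈ l →
      Consume P (PExp.seq (PExp.chr a) (g a)) (a :: w) (some y) →
      Consume P (l.foldr (fun a e => PExp.cho (PExp.seq (PExp.chr a) (g a)) e) base)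
        (a :: w) (some y) := by
  intro l
  induction l with
  | nil => intro base w y hmem; exact absurd hmem List.not_mem_nil
  | cons b t ih =>
    intro base w y hmem h
    by_cases hb : b = a
    · subst hb; exact Consume.cho1 h
    · refine Consume.cho2 (Consume.seq_fail1 (Consume.chr_fail w ?_)) ?_
      · exact hb
      · refine ih base w y ?_ h
        rcases List.mem_cons.mp hmem with h' | h'
        · exact absurd h'.symm hb
        · exact h' 

lemma bodyD_complete (D : DFA α σ) (enc : σ → ℕ) (P : ℕ → PExp α)
    (hP : ∀ q, P (enc q) = bodyD D enc q) :
    ∀ (w : List α) (q : σ), D.evalFrom q w ∈ D.accept →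
      Consume P (bodyD D enc q) w (some w) := by
  intro w
  induction w with
  | nil =>
    intro q hq
    unfold bodyD
    rw [if_pos (by simpa using hq)]
    exact fold_nil_succ _ _ _ _ (Consume.not_ok Consume.any_fail)
  | cons a w ih =>
    intro q hq
    unfold bodyD
    apply fold_cons_succ (fun a => PExp.nt (enc (D.step q a))) _ _ _ _
      (by simp)
    have hrec : Consume P (PExp.nt (enc (D.step q a))) w (some w) := by
      apply Consume.nt
      rw [hP]
      exact ih (D.step q a) (by simpa [DFA.evalFrom] using hq)
    have := Consume.seq_ok (x := [a]) (w' := w)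
      (Consume.chr_ok a w) hrec
    simpa using this

lemma seq_chr_inv {P : ℕ → PExp α} {b : α} {e : PExp α} {s y : List α}
    (h : Consume P (.seq (.chr b) e) s (some y)) :
    ∃ t y2, s = b :: t ∧ y = b :: y2 ∧ Consume P e t (some y2) := by
  cases h with
  | seq_ok h1 h2 =>
    rcases chr_inv h1 with ⟨hx, t, ht⟩
    subst hx
    exact ⟨_, _, rfl, rfl, h2⟩

lemma nt_inv {P : ℕ → PExp α} {A : ℕ} {s : List α} {r : Option (List α)}
    (h : Consume P (.nt A) s r) : Consume P (P A) s r := by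
  cases h with
  | nt h => exact h

lemma bodyD_sound (D : DFA α σ) (enc : σ → ℕ) (P : ℕ → PExp α)
    (hP : ∀ q, P (enc q) = bodyD D enc q) :
    ∀ (w : List α) (q : σ) (y : List α),
      Consume P (bodyD D enc q) w (some y) → D.evalFrom q w ∈ D.accept := by
  intro w
  induction w with
  | nil =>
    intro q y h
    unfold bodyD at h
    rcases fold_inv _ _ _ _ _ h with ⟨a, _, h⟩ | h
    · rcases seq_chr_inv h with ⟨t, y2, ht, _, _⟩; simp at ht
    · by_cases hq : q ∈ D.accept
      · simpa [DFA.evalFrom] using hq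
      · rw [if_neg hq] at h
        cases h with
        | not_ok hfail => cases hfail
  | cons a w ih =>
    intro q y h
    unfold bodyD at h
    rcases fold_inv _ _ _ _ _ h with ⟨b, _, h⟩ | h
    · rcases seq_chr_inv h with ⟨t, y2, ht, _, h2⟩
      injection ht with hb htw
      subst hb; subst htw
      have h3 := nt_inv h2
      rw [hP] at h3
      have := ih (D.step q a) y2 h3
      simpa [DFA.evalFrom] using this
    · by_cases hq : q ∈ D.accept
      · rw [if_pos hq] at h
        cases h with
        | not_ok hfail => cases hfail
      · rw [if_neg hq] at h
        cases h with
        | not_ok hfail => cases hfail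

lemma bodyD_linear (D : DFA α σ) (enc : σ → ℕ) (q : σ) : Linear (bodyD D enc q) := by
  unfold bodyD
  have hbase : Linear (α := α)
      (if q ∈ D.accept then PExp.npred PExp.anyc else PExp.npred PExp.eps) := by
    split <;> exact Linear.base trivial
  induction (Finset.univ : Finset α).toList with
  | nil => exact hbase
  | cons a t ih => exact Linear.cho (Linear.pnt _ trivial) ih

lemma bodyD_ntbound (D : DFA α σ) (enc : σ → ℕ) (n : ℕ) (henc : ∀ q, enc q < n)
    (q : σ) : NTBound n (bodyD D enc q) := by
  unfold bodyD
  have hbase : NTBound (α := α) n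
      (if q ∈ D.accept then PExp.npred PExp.anyc else PExp.npred PExp.eps) := by
    split <;> trivial
  induction (Finset.univ : Finset α).toList with
  | nil => exact hbase
  | cons a t ih => exact ⟨⟨trivial, henc _⟩, ih⟩

end DFAtoLPEG


/-- for every DFA there is an LPEG recognizing the same language. -/
theorem dfa_to_lpeg [Fintype α] {σ : Type} [Fintype σ] (D : DFA α σ) :
    ∃ G : LPEG α, (D.accepts : Set (List α)) = G.Lang := by
  classical
  set n := Fintype.card σ with hn
  let e := Fintype.equivFin σ
  let enc : σ → ℕ := fun q => (e q : ℕ)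
  have henc : ∀ q, enc q < n := fun q => (e q).isLt
  let P : ℕ → PExp α := fun A =>
    if h : A < n then bodyD D enc (e.symm ⟨A, h⟩) else PExp.eps
  have hP : ∀ q, P (enc q) = bodyD D enc q := by
    intro q
    simp only [P, dif_pos (henc q)]
    congr 1
    simp [enc]
  refine ⟨⟨⟨n, P, PExp.seq PExp.eps (PExp.nt (enc D.start))⟩, ?_, ?_, ?_⟩, ?_⟩
  · exact Linear.pnt _ trivial
  · exact ⟨trivial, henc _⟩
  · intro A hA
    simp only [P, dif_pos hA]
    exact ⟨bodyD_linear D enc _, bodyD_ntbound D enc n henc _⟩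
  · ext w
    constructor
    · intro hw
      refine ⟨w, ?_⟩
      have h1 : Consume P (bodyD D enc D.start) w (some w) :=
        bodyD_complete D enc P hP w D.start (by rwa [DFA.mem_accepts] at hw)
      have h2 : Consume P (PExp.nt (enc D.start)) w (some w) :=
        Consume.nt (by rwa [hP])
      have := Consume.seq_ok (x := []) (w' := w) (Consume.eps w) h2
      simpa using this
    · rintro ⟨y, h⟩
      replace h : Consume P (PExp.seq PExp.eps (PExp.nt (enc D.start))) w (some y) := h
      cases h with
      | seq_ok h1 h2 =>
        have hx := eps_inv h1
        subst hx
        have h3 := nt_inv h2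
        rw [hP] at h3
        have := bodyD_sound D enc P hP _ D.start _ h3
        simpa [DFA.mem_accepts, DFA.eval] using this
end

section
/- The class of languages generated by LPEGs is exactly the class of regular languages. -/
variable {α : Type}

namespace LPEGAux

variable {α : Type}

theorem consume_det {P : ℕ → PExp α} {e : PExp α} {w : List α} {r : Option (List α)}
    (h : Consume P e w r) : ∀ {r'}, Consume P e w r' → r = r' := by
  induction h with
  | eps w => intro r' h'; cases h'; rfl
  | chr_ok a w =>
    intro r' h'; cases h' with
    | chr_ok => rfl
    | chr_fail _ hne => exact absurd rfl hne
  | chr_fail_nil a => intro r' h'; cases h'; rfl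
  | chr_fail w hne =>
    intro r' h'; cases h' with
    | chr_ok => exact absurd rfl hne
    | chr_fail => rfl
  | any_ok a w => intro r' h'; cases h'; rfl
  | any_fail => intro r' h'; cases h'; rfl
  | @seq_ok e1 e2 x y w' h1 h2 ih1 ih2 =>
    intro r' h'
    generalize heqw : x ++ w' = ww at h'
    cases h' with
    | @seq_ok _ _ x2 y2 w2 h1' h2' =>
      rw [← heqw] at h1'
      have hx := ih1 h1'
      injection hx with hx
      subst hx
      have hw : w' = w2 := List.append_cancel_left heqw
      subst hw
      have := ih2 h2'
      injection this with this
      rw [this]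
    | seq_fail1 h1' =>
      rw [← heqw] at h1'
      exact absurd (ih1 h1') (by simp)
    | @seq_fail2 _ _ x2 w2 h1' h2' =>
      rw [← heqw] at h1'
      have hx := ih1 h1'
      injection hx with hx
      subst hx
      have hw : w' = w2 := List.append_cancel_left heqw
      subst hw
      exact absurd (ih2 h2') (by simp)
  | seq_fail1 h1 ih1 =>
    intro r' h'
    cases h' with
    | seq_ok h1' h2' => exact absurd (ih1 h1') (by simp)
    | seq_fail1 _ => rfl
    | seq_fail2 h1' h2' => exact absurd (ih1 h1') (by simp)
  | @seq_fail2 e1 e2 x w' h1 h2 ih1 ih2 =>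
    intro r' h'
    generalize heqw : x ++ w' = ww at h'
    cases h' with
    | @seq_ok _ _ x2 y2 w2 h1' h2' =>
      rw [← heqw] at h1'
      have hx := ih1 h1'
      injection hx with hx
      subst hx
      have hw : w' = w2 := List.append_cancel_left heqw
      subst hw
      exact absurd (ih2 h2') (by simp)
    | seq_fail1 h1' => rfl
    | seq_fail2 h1' h2' => rfl
  | cho1 h1 ih1 =>
    intro r' h'
    cases h' with
    | cho1 h1' => exact ih1 h1'
    | cho2 h1' h2' => exact absurd (ih1 h1') (by simp)
  | cho2 h1 h2 ih1 ih2 =>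
    intro r' h'
    cases h' with
    | cho1 h1' => exact absurd (ih1 h1') (by simp)
    | cho2 h1' h2' => exact ih2 h2'
  | not_ok h ih =>
    intro r' h'
    cases h' with
    | not_ok _ => rfl
    | not_fail h1' => exact absurd (ih h1') (by simp)
  | not_fail h ih =>
    intro r' h'
    cases h' with
    | not_ok h1' => exact absurd (ih h1') (by simp)
    | not_fail _ => rfl
  | star_done h ih =>
    intro r' h'
    cases h' with
    | star_done _ => rfl
    | star_step h1' h2' => exact absurd (ih h1') (by simp)
  | @star_step e x y w' h1 h2 ih1 ih2 =>
    intro r' h'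
    generalize heqw : x ++ w' = ww at h'
    cases h' with
    | star_done h1' =>
      rw [← heqw] at h1'
      exact absurd (ih1 h1') (by simp)
    | @star_step _ x2 y2 w2 h1' h2' =>
      rw [← heqw] at h1'
      have hx := ih1 h1'
      injection hx with hx
      subst hx
      have hw : w' = w2 := List.append_cancel_left heqw
      subst hw
      have := ih2 h2'
      injection this with this
      rw [this]
  | opt_ok h ih =>
    intro r' h'
    cases h' with
    | opt_ok h1' => exact ih h1'
    | opt_eps h1' => exact absurd (ih h1') (by simp)
  | opt_eps h ih =>
    intro r' h'
    cases h' with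
    | opt_ok h1' => exact absurd (ih h1') (by simp)
    | opt_eps _ => rfl
  | and_ok h ih =>
    intro r' h'
    cases h' with
    | and_ok _ => rfl
    | and_fail h1' => exact absurd (ih h1') (by simp)
  | and_fail h ih =>
    intro r' h'
    cases h' with
    | and_ok h1' => exact absurd (ih h1') (by simp)
    | and_fail _ => rfl
  | @plus_ok e x y w' h1 h2 ih1 ih2 =>
    intro r' h'
    generalize heqw : x ++ w' = ww at h'
    cases h' with
    | @plus_ok _ x2 y2 w2 h1' h2' =>
      rw [← heqw] at h1'
      have hx := ih1 h1'
      injection hx with hx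
      subst hx
      have hw : w' = w2 := List.append_cancel_left heqw
      subst hw
      have := ih2 h2'
      injection this with this
      rw [this]
    | plus_fail h1' =>
      rw [← heqw] at h1'
      exact absurd (ih1 h1') (by simp)
  | plus_fail h ih =>
    intro r' h'
    cases h' with
    | plus_ok h1' h2' => exact absurd (ih h1') (by simp)
    | plus_fail _ => rfl
  | nt h ih =>
    intro r' h'
    cases h' with
    | nt h1' => exact ih h1'

theorem star_ne_fail {P : ℕ → PExp α} {e : PExp α} {w : List α}
    (h : Consume P (.star e) w none) : False := by
  cases h

theorem consume_prefix {P : ℕ → PExp α} {e : PExp α} {w : List α} {r : Option (List α)}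
    (h : Consume P e w r) : ∀ {y}, r = some y → ∃ w', w = y ++ w' := by
  induction h with
  | eps w => intro y hy; injection hy with hy; subst hy; exact ⟨w, rfl⟩
  | chr_ok a w => intro y hy; injection hy with hy; subst hy; exact ⟨w, rfl⟩
  | chr_fail_nil a => exact fun hy => by simp at hy
  | chr_fail w hne => exact fun hy => by simp at hy
  | any_ok a w => intro y hy; injection hy with hy; subst hy; exact ⟨w, rfl⟩
  | any_fail => exact fun hy => by simp at hy
  | seq_ok h1 h2 ih1 ih2 =>
    intro y hy
    injection hy with hy
    subst hy
    obtain ⟨w2, hw2⟩ := ih2 rfl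
    exact ⟨w2, by rw [hw2, List.append_assoc]⟩
  | seq_fail1 h ih => exact fun hy => by simp at hy
  | seq_fail2 h1 h2 ih1 ih2 => exact fun hy => by simp at hy
  | cho1 h ih => exact ih
  | cho2 h1 h2 ih1 ih2 => exact ih2
  | @not_ok _ w h ih => intro y hy; injection hy with hy; subst hy; exact ⟨w, rfl⟩
  | not_fail h ih => exact fun hy => by simp at hy
  | @star_done _ w h ih => intro y hy; injection hy with hy; subst hy; exact ⟨w, rfl⟩
  | star_step h1 h2 ih1 ih2 =>
    intro y hy
    injection hy with hy
    subst hy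
    obtain ⟨w2, hw2⟩ := ih2 rfl
    exact ⟨w2, by rw [hw2, List.append_assoc]⟩
  | opt_ok h ih => exact ih
  | @opt_eps _ w h ih => intro y hy; injection hy with hy; subst hy; exact ⟨w, rfl⟩
  | @and_ok _ w _ h ih => intro y hy; injection hy with hy; subst hy; exact ⟨w, rfl⟩
  | and_fail h ih => exact fun hy => by simp at hy
  | plus_ok h1 h2 ih1 ih2 =>
    intro y hy
    injection hy with hy
    subst hy
    obtain ⟨w2, hw2⟩ := ih2 rfl
    exact ⟨w2, by rw [hw2, List.append_assoc]⟩
  | plus_fail h ih => exact fun hy => by simp at hy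
  | nt h ih => exact ih



inductive Code (α : Type) : Type
  | acc : Code α
  | rej : Code α
  | pe (e : PExp α) (k : Code α) : Code α

inductive Instr (α : Type) : Type
  | acc : Instr α
  | rej : Instr α
  | goto (k : Code α) : Instr α
  | read (k0 : Code α) (f : α → Code α) : Instr α
  | ite (t k1 k2 : Code α) : Instr α

def Instr.succs : Instr α → Set (Code α)
  | .acc => ∅
  | .rej => ∅
  | .goto k => {k}
  | .read k0 f => insert k0 (Set.range f)
  | .ite t k1 k2 => {t, k1, k2}

variable [DecidableEq α]

def instr (P : ℕ → PExp α) : Code α → Instr α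
  | .acc => .acc
  | .rej => .rej
  | .pe .eps k => .goto k
  | .pe (.chr a) k => .read .rej fun b => if b = a then k else .rej
  | .pe .anyc k => .read .rej fun _ => k
  | .pe (.seq e1 e2) k => .goto (.pe e1 (.pe e2 k))
  | .pe (.cho e1 e2) k => .ite (.pe e1 .acc) (.pe e1 k) (.pe e2 k)
  | .pe (.star e) k => .ite (.pe e .acc) (.pe e (.pe (.star e) k)) k
  | .pe (.npred e) k => .ite (.pe e .acc) .rej k
  | .pe (.opt e) k => .ite (.pe e .acc) (.pe e k) k
  | .pe (.apred e) k => .ite (.pe e .acc) k .rej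
  | .pe (.plus e) k => .goto (.pe e (.pe (.star e) k))
  | .pe (.nt A) k => .goto (.pe (P A) k)

inductive MRun (ins : Code α → Instr α) : Code α → List α → Bool → Prop
  | acc {q w} : ins q = .acc → MRun ins q w true
  | rej {q w} : ins q = .rej → MRun ins q w false
  | goto {q k w b} : ins q = .goto k → MRun ins k w b → MRun ins q w b
  | read_nil {q k0 f b} : ins q = .read k0 f → MRun ins k0 [] b → MRun ins q [] b
  | read_cons {q k0 f a w b} : ins q = .read k0 f → MRun ins (f a) w b →
      MRun ins q (a :: w) b
  | ite_t {q t k1 k2 w b} : ins q = .ite t k1 k2 → MRun ins t w true → MRun ins k1 w b →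
      MRun ins q w b
  | ite_f {q t k1 k2 w b} : ins q = .ite t k1 k2 → MRun ins t w false → MRun ins k2 w b →
      MRun ins q w b

def Good (P : ℕ → PExp α) : Code α → List α → Bool → Prop
  | .acc, _, b => b = true
  | .rej, _, b => b = false
  | .pe e k, w, true => ∃ x w', w = x ++ w' ∧ Consume P e w (some x) ∧ Good P k w' true
  | .pe e k, w, false =>
      Consume P e w none ∨ ∃ x w', w = x ++ w' ∧ Consume P e w (some x) ∧ Good P k w' false

theorem sound {P : ℕ → PExp α} {e : PExp α} {w : List α} {r : Option (List α)}
    (h : Consume P e w r) :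
    ∀ k : Code α,
      (∀ x w' b, r = some x → w = x ++ w' → MRun (instr P) k w' b →
        MRun (instr P) (.pe e k) w b) ∧
      (r = none → MRun (instr P) (.pe e k) w false) := by
  induction h with
  | eps w =>
    intro k
    constructor
    · intro x w' b hx hw hr
      injection hx with hx; subst hx
      rw [List.nil_append] at hw; subst hw
      exact .goto rfl hr
    · intro hno; simp at hno
  | chr_ok a w =>
    intro k
    constructor
    · intro x w' b hx hw hr
      injection hx with hx; subst hx
      have hw' : w = w' := by simpa using hw
      subst hw'
      refine .read_cons rfl ?_
      show MRun (instr P) (if a = a then k else Code.rej) w b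
      rw [if_pos rfl]; exact hr
    · intro hno; simp at hno
  | chr_fail_nil a =>
    intro k
    constructor
    · intro x w' b hx hw hr; simp at hx
    · intro _; exact .read_nil rfl (.rej rfl)
  | @chr_fail a c w hne =>
    intro k
    constructor
    · intro x w' b hx hw hr; simp at hx
    · intro _
      refine .read_cons rfl ?_
      show MRun (instr P) (if c = a then k else Code.rej) w false
      rw [if_neg fun hh => hne hh.symm]
      exact .rej rfl
  | any_ok a w =>
    intro k
    constructor
    · intro x w' b hx hw hr
      injection hx with hx; subst hx
      have hw' : w = w' := by simpa using hw
      subst hw'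
      exact .read_cons rfl hr
    · intro hno; simp at hno
  | any_fail =>
    intro k
    exact ⟨fun x w' b hx _ _ => by simp at hx, fun _ => .read_nil rfl (.rej rfl)⟩
  | @seq_ok e1 e2 x y w' h1 h2 ih1 ih2 =>
    intro k
    constructor
    · intro x0 w0 b hx hw hr
      injection hx with hx; subst hx
      rw [List.append_assoc] at hw
      have hw' : w' = y ++ w0 := List.append_cancel_left hw
      subst hw'
      have hk2 := (ih2 k).1 y w0 b rfl rfl hr
      have hk1 := (ih1 (.pe e2 k)).1 x (y ++ w0) b rfl rfl hk2
      exact .goto rfl hk1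
    · intro hno; simp at hno
  | @seq_fail1 e1 e2 w h1 ih1 =>
    intro k
    exact ⟨fun x w' b hx _ _ => by simp at hx,
      fun _ => .goto rfl ((ih1 (.pe e2 k)).2 rfl)⟩
  | @seq_fail2 e1 e2 x w' h1 h2 ih1 ih2 =>
    intro k
    refine ⟨fun x0 w0 b hx _ _ => by simp at hx, fun _ => ?_⟩
    have hk2 := (ih2 k).2 rfl
    have hk1 := (ih1 (.pe e2 k)).1 x w' false rfl rfl hk2
    exact .goto rfl hk1
  | cho1 h1 ih1 =>
    intro k
    constructor
    · intro x0 w0 b hx hw hr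
      have ht := (ih1 .acc).1 x0 w0 true hx hw (.acc rfl)
      exact .ite_t rfl ht ((ih1 k).1 x0 w0 b hx hw hr)
    · intro hno; simp at hno
  | cho2 h1 h2 ih1 ih2 =>
    intro k
    have htf := (ih1 .acc).2 rfl
    constructor
    · intro x0 w0 b hx hw hr
      exact .ite_f rfl htf ((ih2 k).1 x0 w0 b hx hw hr)
    · intro hno
      exact .ite_f rfl htf ((ih2 k).2 hno)
  | not_ok h ih =>
    intro k
    constructor
    · intro x0 w0 b hx hw hr
      injection hx with hx; subst hx
      rw [List.nil_append] at hw; subst hw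
      exact .ite_f rfl ((ih .acc).2 rfl) hr
    · intro hno; simp at hno
  | not_fail h ih =>
    intro k
    refine ⟨fun x0 w0 b hx _ _ => by simp at hx, fun _ => ?_⟩
    obtain ⟨w2, hw2⟩ := consume_prefix h rfl
    have ht := (ih .acc).1 _ w2 true rfl hw2 (.acc rfl)
    exact .ite_t rfl ht (.rej rfl)
  | star_done h ih =>
    intro k
    constructor
    · intro x0 w0 b hx hw hr
      injection hx with hx; subst hx
      rw [List.nil_append] at hw; subst hw
      exact .ite_f rfl ((ih .acc).2 rfl) hr
    · intro hno; simp at hno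
  | @star_step e x y w' h1 h2 ih1 ih2 =>
    intro k
    constructor
    · intro x0 w0 b hx hw hr
      injection hx with hx; subst hx
      rw [List.append_assoc] at hw
      have hw' : w' = y ++ w0 := List.append_cancel_left hw
      subst hw'
      have ht := (ih1 .acc).1 x (y ++ w0) true rfl rfl (.acc rfl)
      have hin := (ih2 k).1 y w0 b rfl rfl hr
      have hb := (ih1 (.pe (.star e) k)).1 x (y ++ w0) b rfl rfl hin
      exact .ite_t rfl ht hb
    · intro hno; simp at hno
  | opt_ok h ih =>
    intro k
    constructor
    · intro x0 w0 b hx hw hr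
      have ht := (ih .acc).1 x0 w0 true hx hw (.acc rfl)
      exact .ite_t rfl ht ((ih k).1 x0 w0 b hx hw hr)
    · intro hno; simp at hno
  | opt_eps h ih =>
    intro k
    constructor
    · intro x0 w0 b hx hw hr
      injection hx with hx; subst hx
      rw [List.nil_append] at hw; subst hw
      exact .ite_f rfl ((ih .acc).2 rfl) hr
    · intro hno; simp at hno
  | and_ok h ih =>
    intro k
    constructor
    · intro x0 w0 b hx hw hr
      injection hx with hx; subst hx
      rw [List.nil_append] at hw; subst hw
      obtain ⟨w2, hw2⟩ := consume_prefix h rfl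
      have ht := (ih .acc).1 _ w2 true rfl hw2 (.acc rfl)
      exact .ite_t rfl ht hr
    · intro hno; simp at hno
  | and_fail h ih =>
    intro k
    exact ⟨fun x0 w0 b hx _ _ => by simp at hx,
      fun _ => .ite_f rfl ((ih .acc).2 rfl) (.rej rfl)⟩
  | @plus_ok e x y w' h1 h2 ih1 ih2 =>
    intro k
    constructor
    · intro x0 w0 b hx hw hr
      injection hx with hx; subst hx
      rw [List.append_assoc] at hw
      have hw' : w' = y ++ w0 := List.append_cancel_left hw
      subst hw'
      have hin := (ih2 k).1 y w0 b rfl rfl hr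
      have hb := (ih1 (.pe (.star e) k)).1 x (y ++ w0) b rfl rfl hin
      exact .goto rfl hb
    · intro hno; simp at hno
  | @plus_fail e w h ih =>
    intro k
    exact ⟨fun x0 w0 b hx _ _ => by simp at hx,
      fun _ => .goto rfl ((ih (.pe (.star e) k)).2 rfl)⟩
  | nt h ih =>
    intro k
    exact ⟨fun x0 w0 b hx hw hr => .goto rfl ((ih k).1 x0 w0 b hx hw hr),
      fun hno => .goto rfl ((ih k).2 hno)⟩

theorem complete {P : ℕ → PExp α} {q : Code α} {w : List α} {b : Bool}
    (h : MRun (instr P) q w b) : Good P q w b := by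
  induction h with
  | @acc q w hq =>
    cases q with
    | acc => rfl
    | rej => simp [instr] at hq
    | pe e k => cases e <;> simp [instr] at hq
  | @rej q w hq =>
    cases q with
    | acc => simp [instr] at hq
    | rej => rfl
    | pe e k => cases e <;> simp [instr] at hq
  | @goto q k w b hq hr ih =>
    cases q with
    | acc => simp [instr] at hq
    | rej => simp [instr] at hq
    | pe e k' =>
      cases e with
      | chr a => simp [instr] at hq
      | anyc => simp [instr] at hq
      | cho e1 e2 => simp [instr] at hq
      | star e => simp [instr] at hq
      | npred e => simp [instr] at hq
      | opt e => simp [instr] at hq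
      | apred e => simp [instr] at hq
      | eps =>
        injection hq with hq; subst hq
        cases b with
        | true => exact ⟨[], w, rfl, Consume.eps w, ih⟩
        | false => exact Or.inr ⟨[], w, rfl, Consume.eps w, ih⟩
      | seq e1 e2 =>
        injection hq with hq; subst hq
        cases b with
        | true =>
          obtain ⟨x, w1, hw, h1, hrest⟩ := ih
          obtain ⟨y, w2, hw2, h2, hk3⟩ := hrest
          subst hw; subst hw2
          exact ⟨x ++ y, w2, by rw [List.append_assoc], Consume.seq_ok h1 h2, hk3⟩
        | false =>
          rcases ih with h1n | ⟨x, w1, hw, h1, hrest⟩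
          · exact Or.inl (Consume.seq_fail1 h1n)
          · subst hw
            rcases hrest with h2n | ⟨y, w2, hw2, h2, hk3⟩
            · exact Or.inl (Consume.seq_fail2 h1 h2n)
            · subst hw2
              exact Or.inr ⟨x ++ y, w2, by rw [List.append_assoc],
                Consume.seq_ok h1 h2, hk3⟩
      | plus e =>
        injection hq with hq; subst hq
        cases b with
        | true =>
          obtain ⟨x, w1, hw, h1, hrest⟩ := ih
          obtain ⟨y, w2, hw2, h2, hk3⟩ := hrest
          subst hw; subst hw2
          exact ⟨x ++ y, w2, by rw [List.append_assoc], Consume.plus_ok h1 h2, hk3⟩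
        | false =>
          rcases ih with h1n | ⟨x, w1, hw, h1, hrest⟩
          · exact Or.inl (Consume.plus_fail h1n)
          · subst hw
            rcases hrest with h2n | ⟨y, w2, hw2, h2, hk3⟩
            · exact (star_ne_fail h2n).elim
            · subst hw2
              exact Or.inr ⟨x ++ y, w2, by rw [List.append_assoc],
                Consume.plus_ok h1 h2, hk3⟩
      | nt A =>
        injection hq with hq; subst hq
        cases b with
        | true =>
          obtain ⟨x, w1, hw, h1, hk3⟩ := ih
          exact ⟨x, w1, hw, Consume.nt h1, hk3⟩
        | false =>
          rcases ih with h1n | ⟨x, w1, hw, h1, hk3⟩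
          · exact Or.inl (Consume.nt h1n)
          · exact Or.inr ⟨x, w1, hw, Consume.nt h1, hk3⟩
  | @read_nil q k0 f b hq hr ih =>
    cases q with
    | acc => simp [instr] at hq
    | rej => simp [instr] at hq
    | pe e k' =>
      cases e with
      | chr a =>
        injection hq with hk0 hf
        subst hk0
        have hb : b = false := ih
        subst hb
        exact Or.inl (Consume.chr_fail_nil a)
      | anyc =>
        injection hq with hk0 hf
        subst hk0
        have hb : b = false := ih
        subst hb
        exact Or.inl Consume.any_fail
      | eps => simp [instr] at hq
      | seq e1 e2 => simp [instr] at hq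
      | cho e1 e2 => simp [instr] at hq
      | star e => simp [instr] at hq
      | npred e => simp [instr] at hq
      | opt e => simp [instr] at hq
      | apred e => simp [instr] at hq
      | plus e => simp [instr] at hq
      | nt A => simp [instr] at hq
  | @read_cons q k0 f a w b hq hr ih =>
    cases q with
    | acc => simp [instr] at hq
    | rej => simp [instr] at hq
    | pe e k' =>
      cases e with
      | chr c =>
        injection hq with hk0 hf
        subst hf
        have ih' : Good P (if a = c then k' else Code.rej) w b := ih
        by_cases hac : a = c
        · subst hac
          rw [if_pos rfl] at ih'
          cases b with
          | true => exact ⟨[a], w, rfl, Consume.chr_ok a w, ih'⟩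
          | false => exact Or.inr ⟨[a], w, rfl, Consume.chr_ok a w, ih'⟩
        · rw [if_neg hac] at ih'
          have hb : b = false := ih'
          subst hb
          exact Or.inl (Consume.chr_fail w fun hh => hac hh.symm)
      | anyc =>
        injection hq with hk0 hf
        subst hf
        have ih' : Good P k' w b := ih
        cases b with
        | true => exact ⟨[a], w, rfl, Consume.any_ok a w, ih'⟩
        | false => exact Or.inr ⟨[a], w, rfl, Consume.any_ok a w, ih'⟩
      | eps => simp [instr] at hq
      | seq e1 e2 => simp [instr] at hq
      | cho e1 e2 => simp [instr] at hq
      | star e => simp [instr] at hq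
      | npred e => simp [instr] at hq
      | opt e => simp [instr] at hq
      | apred e => simp [instr] at hq
      | plus e => simp [instr] at hq
      | nt A => simp [instr] at hq
  | @ite_t q t k1 k2 w b hq ht hk iht ih1 =>
    cases q with
    | acc => simp [instr] at hq
    | rej => simp [instr] at hq
    | pe e k' =>
      cases e with
      | eps => simp [instr] at hq
      | chr a => simp [instr] at hq
      | anyc => simp [instr] at hq
      | seq e1 e2 => simp [instr] at hq
      | plus e => simp [instr] at hq
      | nt A => simp [instr] at hq
      | cho e1 e2 =>
        injection hq with h1 h2 h3
        subst h1; subst h2; subst h3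
        obtain ⟨xt, wt, hwt, hct, -⟩ := iht
        cases b with
        | true =>
          obtain ⟨x, w1, hw, h1, hk3⟩ := ih1
          exact ⟨x, w1, hw, Consume.cho1 h1, hk3⟩
        | false =>
          rcases ih1 with h1n | ⟨x, w1, hw, h1, hk3⟩
          · exact absurd (consume_det hct h1n) (by simp)
          · exact Or.inr ⟨x, w1, hw, Consume.cho1 h1, hk3⟩
      | star e =>
        injection hq with h1 h2 h3
        subst h1; subst h2; subst h3
        obtain ⟨xt, wt, hwt, hct, -⟩ := iht
        cases b with
        | true =>
          obtain ⟨x, w1, hw, h1, hrest⟩ := ih1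
          obtain ⟨y, w2, hw2, h2, hk3⟩ := hrest
          subst hw; subst hw2
          exact ⟨x ++ y, w2, by rw [List.append_assoc], Consume.star_step h1 h2, hk3⟩
        | false =>
          rcases ih1 with h1n | ⟨x, w1, hw, h1, hrest⟩
          · exact absurd (consume_det hct h1n) (by simp)
          · subst hw
            rcases hrest with h2n | ⟨y, w2, hw2, h2, hk3⟩
            · exact (star_ne_fail h2n).elim
            · subst hw2
              exact Or.inr ⟨x ++ y, w2, by rw [List.append_assoc],
                Consume.star_step h1 h2, hk3⟩
      | npred e =>
        injection hq with h1 h2 h3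
        subst h1; subst h2; subst h3
        obtain ⟨xt, wt, hwt, hct, -⟩ := iht
        have hb : b = false := ih1
        subst hb
        exact Or.inl (Consume.not_fail hct)
      | opt e =>
        injection hq with h1 h2 h3
        subst h1; subst h2; subst h3
        obtain ⟨xt, wt, hwt, hct, -⟩ := iht
        cases b with
        | true =>
          obtain ⟨x, w1, hw, h1, hk3⟩ := ih1
          exact ⟨x, w1, hw, Consume.opt_ok h1, hk3⟩
        | false =>
          rcases ih1 with h1n | ⟨x, w1, hw, h1, hk3⟩
          · exact absurd (consume_det hct h1n) (by simp)
          · exact Or.inr ⟨x, w1, hw, Consume.opt_ok h1, hk3⟩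
      | apred e =>
        injection hq with h1 h2 h3
        subst h1; subst h2; subst h3
        obtain ⟨xt, wt, hwt, hct, -⟩ := iht
        cases b with
        | true => exact ⟨[], w, rfl, Consume.and_ok hct, ih1⟩
        | false => exact Or.inr ⟨[], w, rfl, Consume.and_ok hct, ih1⟩
  | @ite_f q t k1 k2 w b hq ht hk iht ih2 =>
    cases q with
    | acc => simp [instr] at hq
    | rej => simp [instr] at hq
    | pe e k' =>
      cases e with
      | eps => simp [instr] at hq
      | chr a => simp [instr] at hq
      | anyc => simp [instr] at hq
      | seq e1 e2 => simp [instr] at hq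
      | plus e => simp [instr] at hq
      | nt A => simp [instr] at hq
      | cho e1 e2 =>
        injection hq with h1 h2 h3
        subst h1; subst h2; subst h3
        have h1n : Consume P e1 w none := by
          rcases iht with h1n | ⟨xt, wt, hwt, hct, habs⟩
          · exact h1n
          · exact absurd habs (by simp [Good])
        cases b with
        | true =>
          obtain ⟨x, w1, hw, h2, hk3⟩ := ih2
          exact ⟨x, w1, hw, Consume.cho2 h1n h2, hk3⟩
        | false =>
          rcases ih2 with h2n | ⟨x, w1, hw, h2, hk3⟩
          · exact Or.inl (Consume.cho2 h1n h2n)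
          · exact Or.inr ⟨x, w1, hw, Consume.cho2 h1n h2, hk3⟩
      | star e =>
        injection hq with h1 h2 h3
        subst h1; subst h2; subst h3
        have h1n : Consume P e w none := by
          rcases iht with h1n | ⟨xt, wt, hwt, hct, habs⟩
          · exact h1n
          · exact absurd habs (by simp [Good])
        cases b with
        | true => exact ⟨[], w, rfl, Consume.star_done h1n, ih2⟩
        | false => exact Or.inr ⟨[], w, rfl, Consume.star_done h1n, ih2⟩
      | npred e =>
        injection hq with h1 h2 h3
        subst h1; subst h2; subst h3
        have h1n : Consume P e w none := by
          rcases iht with h1n | ⟨xt, wt, hwt, hct, habs⟩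
          · exact h1n
          · exact absurd habs (by simp [Good])
        cases b with
        | true => exact ⟨[], w, rfl, Consume.not_ok h1n, ih2⟩
        | false => exact Or.inr ⟨[], w, rfl, Consume.not_ok h1n, ih2⟩
      | opt e =>
        injection hq with h1 h2 h3
        subst h1; subst h2; subst h3
        have h1n : Consume P e w none := by
          rcases iht with h1n | ⟨xt, wt, hwt, hct, habs⟩
          · exact h1n
          · exact absurd habs (by simp [Good])
        cases b with
        | true => exact ⟨[], w, rfl, Consume.opt_eps h1n, ih2⟩
        | false => exact Or.inr ⟨[], w, rfl, Consume.opt_eps h1n, ih2⟩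
      | apred e =>
        injection hq with h1 h2 h3
        subst h1; subst h2; subst h3
        have h1n : Consume P e w none := by
          rcases iht with h1n | ⟨xt, wt, hwt, hct, habs⟩
          · exact h1n
          · exact absurd habs (by simp [Good])
        have hb : b = false := ih2
        subst hb
        exact Or.inl (Consume.and_fail h1n)



def stepFun (ins : Code α → Instr α) (o : Option α) (v : Code α → Prop × Prop) :
    (Code α → Prop × Prop) →o (Code α → Prop × Prop) where
  toFun x c :=
    match ins c with
    | .acc => ⟨True, False⟩
    | .rej => ⟨False, True⟩
    | .goto k => x k
    | .read k0 f =>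
      match o with
      | none => x k0
      | some a => v (f a)
    | .ite t k1 k2 =>
      ⟨((x t).1 ∧ (x k1).1) ∨ ((x t).2 ∧ (x k2).1),
       ((x t).1 ∧ (x k1).2) ∨ ((x t).2 ∧ (x k2).2)⟩
  monotone' := by
    intro x y hxy c
    cases hins : ins c with
    | acc => simp only [hins]; exact le_refl _
    | rej => simp only [hins]; exact le_refl _
    | goto k => simp only [hins]; exact hxy k
    | read k0 f =>
      simp only [hins]
      cases o with
      | none => exact hxy k0
      | some a => exact le_refl _
    | ite t k1 k2 =>
      simp only [hins]
      exact ⟨fun h => h.imp (And.imp (hxy t).1 (hxy k1).1) (And.imp (hxy t).2 (hxy k2).1),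
             fun h => h.imp (And.imp (hxy t).1 (hxy k1).2) (And.imp (hxy t).2 (hxy k2).2)⟩

theorem stepFun_apply' (ins : Code α → Instr α) (o : Option α) (v x : Code α → Prop × Prop)
    (c : Code α) : stepFun ins o v x c =
    match ins c with
    | .acc => ⟨True, False⟩
    | .rej => ⟨False, True⟩
    | .goto k => x k
    | .read k0 f =>
      match o with
      | none => x k0
      | some a => v (f a)
    | .ite t k1 k2 =>
      ⟨((x t).1 ∧ (x k1).1) ∨ ((x t).2 ∧ (x k2).1),
       ((x t).1 ∧ (x k1).2) ∨ ((x t).2 ∧ (x k2).2)⟩ := rfl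

def vecP (ins : Code α → Instr α) : List α → Code α → Prop × Prop
  | [] => OrderHom.lfp (stepFun ins none fun _ => ⟨True, True⟩)
  | a :: w => OrderHom.lfp (stepFun ins (some a) (vecP ins w))

def prevP (ins : Code α → Instr α) : List α → Code α → Prop × Prop
  | [] => fun _ => ⟨True, True⟩
  | _ :: w => vecP ins w

theorem vecP_eq (ins : Code α → Instr α) (w : List α) :
    vecP ins w = stepFun ins w.head? (prevP ins w) (vecP ins w) := by
  cases w <;> exact (OrderHom.map_lfp _).symm

theorem mrun_vecP {ins : Code α → Instr α} {c : Code α} {w : List α} {b : Bool}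
    (h : MRun ins c w b) : cond b (vecP ins w c).1 (vecP ins w c).2 := by
  induction h with
  | @acc q w hq =>
    have hv := congrFun (vecP_eq ins w) q
    show (vecP ins w q).1
    rw [hv]
    simp only [stepFun_apply', hq]
  | @rej q w hq =>
    have hv := congrFun (vecP_eq ins w) q
    show (vecP ins w q).2
    rw [hv]
    simp only [stepFun_apply', hq]
  | @goto q k w b hq hr ih =>
    have hv := congrFun (vecP_eq ins w) q
    rw [hv]
    simp only [stepFun_apply', hq]
    exact ih
  | @read_nil q k0 f b hq hr ih =>
    have hv := congrFun (vecP_eq ins []) q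
    rw [hv]
    simp only [stepFun_apply', hq, List.head?]
    exact ih
  | @read_cons q k0 f a w b hq hr ih =>
    have hv := congrFun (vecP_eq ins (a :: w)) q
    rw [hv]
    simp only [stepFun_apply', hq, List.head?, prevP]
    exact ih
  | @ite_t q t k1 k2 w b hq ht hk iht ih1 =>
    have hv := congrFun (vecP_eq ins w) q
    rw [hv]
    simp only [stepFun_apply', hq]
    cases b with
    | true => exact Or.inl ⟨iht, ih1⟩
    | false => exact Or.inl ⟨iht, ih1⟩
  | @ite_f q t k1 k2 w b hq ht hk iht ih2 =>
    have hv := congrFun (vecP_eq ins w) q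
    rw [hv]
    simp only [stepFun_apply', hq]
    cases b with
    | true => exact Or.inr ⟨iht, ih2⟩
    | false => exact Or.inr ⟨iht, ih2⟩

theorem vecP_mrun (ins : Code α → Instr α) : ∀ (w : List α),
    (∀ c, (vecP ins w c).1 → MRun ins c w true) ∧
    (∀ c, (vecP ins w c).2 → MRun ins c w false) := by
  intro w
  induction w with
  | nil =>
    have hle : vecP ins [] ≤
        fun c => (⟨MRun ins c [] true, MRun ins c [] false⟩ : Prop × Prop) := by
      apply OrderHom.lfp_le
      intro c
      cases hins : ins c with
      | acc =>
        simp only [stepFun_apply', hins]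
        exact ⟨fun _ => .acc hins, fun h => h.elim⟩
      | rej =>
        simp only [stepFun_apply', hins]
        exact ⟨fun h => h.elim, fun _ => .rej hins⟩
      | goto k =>
        simp only [stepFun_apply', hins]
        exact ⟨fun h => .goto hins h, fun h => .goto hins h⟩
      | read k0 f =>
        simp only [stepFun_apply', hins]
        exact ⟨fun h => .read_nil hins h, fun h => .read_nil hins h⟩
      | ite t k1 k2 =>
        simp only [stepFun_apply', hins]
        exact ⟨fun h => h.elim (fun hh => .ite_t hins hh.1 hh.2) (fun hh => .ite_f hins hh.1 hh.2),
               fun h => h.elim (fun hh => .ite_t hins hh.1 hh.2) (fun hh => .ite_f hins hh.1 hh.2)⟩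
    exact ⟨fun c => (hle c).1, fun c => (hle c).2⟩
  | cons a w IH =>
    have hle : vecP ins (a :: w) ≤
        fun c => (⟨MRun ins c (a :: w) true, MRun ins c (a :: w) false⟩ : Prop × Prop) := by
      apply OrderHom.lfp_le
      intro c
      cases hins : ins c with
      | acc =>
        simp only [stepFun_apply', hins]
        exact ⟨fun _ => .acc hins, fun h => h.elim⟩
      | rej =>
        simp only [stepFun_apply', hins]
        exact ⟨fun h => h.elim, fun _ => .rej hins⟩
      | goto k =>
        simp only [stepFun_apply', hins]
        exact ⟨fun h => .goto hins h, fun h => .goto hins h⟩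
      | read k0 f =>
        simp only [stepFun_apply', hins]
        exact ⟨fun h => .read_cons hins (IH.1 (f a) h), fun h => .read_cons hins (IH.2 (f a) h)⟩
      | ite t k1 k2 =>
        simp only [stepFun_apply', hins]
        exact ⟨fun h => h.elim (fun hh => .ite_t hins hh.1 hh.2) (fun hh => .ite_f hins hh.1 hh.2),
               fun h => h.elim (fun hh => .ite_t hins hh.1 hh.2) (fun hh => .ite_f hins hh.1 hh.2)⟩
    exact ⟨fun c => (hle c).1, fun c => (hle c).2⟩

theorem step_local {ins : Code α → Instr α} {T : Set (Code α)}
    (hcl : ∀ c ∈ T, (ins c).succs ⊆ T) {o : Option α} {v v' x x' : Code α → Prop × Prop}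
    (hv : ∀ c ∈ T, v c = v' c) (hx : ∀ c ∈ T, x c = x' c) :
    ∀ c ∈ T, stepFun ins o v x c = stepFun ins o v' x' c := by
  intro c hc
  have hsub := hcl c hc
  cases hins : ins c with
  | acc => simp only [stepFun_apply', hins]
  | rej => simp only [stepFun_apply', hins]
  | goto k =>
    rw [hins] at hsub
    simp only [stepFun_apply', hins]
    exact hx k (hsub (by simp [Instr.succs]))
  | read k0 f =>
    rw [hins] at hsub
    simp only [stepFun_apply', hins]
    cases o with
    | none => exact hx k0 (hsub (by simp [Instr.succs]))
    | some a => exact hv (f a) (hsub (by simp only [Instr.succs]; exact Set.mem_insert_iff.mpr (Or.inr ⟨a, rfl⟩)))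
  | ite t k1 k2 =>
    rw [hins] at hsub
    simp only [stepFun_apply', hins]
    rw [hx t (hsub (by simp [Instr.succs])), hx k1 (hsub (by simp [Instr.succs])),
      hx k2 (hsub (by simp [Instr.succs]))]

theorem lfp_local {ins : Code α → Instr α} {T : Set (Code α)}
    (hcl : ∀ c ∈ T, (ins c).succs ⊆ T) {o : Option α} {v v' : Code α → Prop × Prop}
    (hv : ∀ c ∈ T, v c = v' c) :
    ∀ c ∈ T, OrderHom.lfp (stepFun ins o v) c = OrderHom.lfp (stepFun ins o v') c := by
  classical
  have key : ∀ (u u' : Code α → Prop × Prop), (∀ c ∈ T, u c = u' c) →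
      ∀ c ∈ T, OrderHom.lfp (stepFun ins o u) c ≤ OrderHom.lfp (stepFun ins o u') c := by
    intro u u' hu c hc
    set m : Code α → Prop × Prop :=
      fun d => if d ∈ T then OrderHom.lfp (stepFun ins o u') d else ⟨True, True⟩ with hm
    have hpre : stepFun ins o u m ≤ m := by
      intro d
      by_cases hd : d ∈ T
      · have heq : stepFun ins o u m d =
            stepFun ins o u' (OrderHom.lfp (stepFun ins o u')) d :=
          step_local hcl hu (fun e he => by simp only [hm, if_pos he]) d hd
        rw [heq, OrderHom.map_lfp]
        simp only [hm, if_pos hd]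
        exact le_refl _
      · simp only [hm, if_neg hd]
        exact ⟨fun _ => trivial, fun _ => trivial⟩
    have hle := OrderHom.lfp_le _ hpre
    have h2 := hle c
    simpa only [hm, if_pos hc] using h2
  intro c hc
  exact le_antisymm (key v v' hv c hc) (key v' v (fun d hd => (hv d hd).symm) c hc)

theorem machine_regular (ins : Code α → Instr α) (T : Set (Code α)) (hfin : T.Finite)
    (hcl : ∀ c ∈ T, (ins c).succs ⊆ T) (q0 : Code α) (hq0 : q0 ∈ T) :
    ∃ (σ : Type) (_ : Fintype σ) (D : DFA α σ),
      (D.accepts : Set (List α)) = {w : List α | MRun ins q0 w true} := by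
  classical
  letI : Fintype T := hfin.fintype
  let ext : (T → Prop × Prop) → Code α → Prop × Prop := fun v c =>
    if h : c ∈ T then v ⟨c, h⟩ else ⟨True, True⟩
  let F : α → (T → Prop × Prop) → (T → Prop × Prop) := fun a v q =>
    OrderHom.lfp (stepFun ins (some a) (ext v)) q.1
  let VT : List α → (T → Prop × Prop) := fun w q => vecP ins w q.1
  have hVT : ∀ (a : α) (w : List α), VT (a :: w) = F a (VT w) := by
    intro a w
    funext q
    exact lfp_local hcl (fun c hc => by simp only [ext, VT, dif_pos hc]) q.1 q.2
  let σ := (T → Prop × Prop) → Prop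
  letI : Fintype σ := by
    letI : DecidableEq T := Classical.decEq _
    letI : DecidableEq (T → Prop × Prop) := Classical.decEq _
    infer_instance
  let D : DFA α σ := ⟨fun g a => fun v => g (F a v), fun v => (v ⟨q0, hq0⟩).1, {g | g (VT [])}⟩
  refine ⟨σ, inferInstance, D, ?_⟩
  have key : ∀ (w : List α) (g : σ), D.evalFrom g w (VT []) = g (VT w) := by
    intro w
    induction w with
    | nil => intro g; rfl
    | cons a w IH =>
      intro g
      have h1 : D.evalFrom g (a :: w) = D.evalFrom (D.step g a) w := rfl
      rw [h1, IH]
      show g (F a (VT w)) = g (VT (a :: w))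
      rw [hVT]
  ext w
  have hacc : w ∈ D.accepts ↔ (D.evalFrom D.start w) (VT []) := Iff.rfl
  rw [hacc, key w D.start]
  show (VT w ⟨q0, hq0⟩).1 ↔ MRun ins q0 w true
  exact ⟨fun h => (vecP_mrun ins w).1 q0 h, fun h => mrun_vecP h⟩



def conts : PExp α → Code α → Set (Code α)
  | .eps, k => {.pe .eps k}
  | .chr a, k => {.pe (.chr a) k}
  | .anyc, k => {.pe .anyc k}
  | .seq e1 e2, k => insert (.pe (.seq e1 e2) k) (conts e1 (.pe e2 k) ∪ conts e2 k)
  | .cho e1 e2, k => insert (.pe (.cho e1 e2) k) (conts e1 .acc ∪ conts e1 k ∪ conts e2 k)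
  | .star e, k => insert (.pe (.star e) k) (conts e .acc ∪ conts e (.pe (.star e) k))
  | .npred e, k => insert (.pe (.npred e) k) (conts e .acc)
  | .opt e, k => insert (.pe (.opt e) k) (conts e .acc ∪ conts e k)
  | .apred e, k => insert (.pe (.apred e) k) (conts e .acc)
  | .plus e, k => insert (.pe (.plus e) k) (conts e .acc)
  | .nt A, k => {.pe (.nt A) k}

theorem conts_finite (e : PExp α) : ∀ k, (conts e k).Finite := by
  induction e with
  | eps => intro k; exact Set.finite_singleton _
  | chr a => intro k; exact Set.finite_singleton _
  | anyc => intro k; exact Set.finite_singleton _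
  | seq e1 e2 ih1 ih2 => intro k; exact Set.Finite.insert _ ((ih1 _).union (ih2 _))
  | cho e1 e2 ih1 ih2 =>
    intro k; exact Set.Finite.insert _ (((ih1 _).union (ih1 _)).union (ih2 _))
  | star e ih => intro k; exact Set.Finite.insert _ ((ih _).union (ih _))
  | npred e ih => intro k; exact Set.Finite.insert _ (ih _)
  | opt e ih => intro k; exact Set.Finite.insert _ ((ih _).union (ih _))
  | apred e ih => intro k; exact Set.Finite.insert _ (ih _)
  | plus e ih => intro k; exact Set.Finite.insert _ (ih _)
  | nt A => intro k; exact Set.finite_singleton _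

theorem self_mem_conts (e : PExp α) (k : Code α) : Code.pe e k ∈ conts e k := by
  cases e <;> simp [conts]

def triple (k : Code α) : Set (Code α) := insert Code.acc (insert Code.rej {k})

theorem nfree_closed {P : ℕ → PExp α} :
    ∀ (p : PExp α), NFree p → ∀ (k : Code α), ∀ c ∈ conts p k,
      (instr P c).succs ⊆ conts p k ∪ triple k := by
  intro p
  induction p with
  | eps =>
    intro _ k c hc d hd
    simp only [conts, Set.mem_singleton_iff] at hc
    subst hc
    simp only [instr, Instr.succs, Set.mem_singleton_iff] at hd
    subst hd
    exact Or.inr (by simp [triple])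
  | chr a =>
    intro _ k c hc d hd
    simp only [conts, Set.mem_singleton_iff] at hc
    subst hc
    simp only [instr, Instr.succs, Set.mem_insert_iff, Set.mem_range] at hd
    rcases hd with rfl | ⟨b, rfl⟩
    · exact Or.inr (by simp [triple])
    · split
      · exact Or.inr (by simp [triple])
      · exact Or.inr (by simp [triple])
  | anyc =>
    intro _ k c hc d hd
    simp only [conts, Set.mem_singleton_iff] at hc
    subst hc
    simp only [instr, Instr.succs, Set.mem_insert_iff, Set.mem_range] at hd
    rcases hd with rfl | ⟨b, rfl⟩
    · exact Or.inr (by simp [triple])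
    · exact Or.inr (by simp [triple])
  | seq e1 e2 ih1 ih2 =>
    intro hp k c hc d hd
    obtain ⟨hp1, hp2⟩ := hp
    simp only [conts, Set.mem_insert_iff, Set.mem_union] at hc
    rcases hc with rfl | hc1 | hc2
    · simp only [instr, Instr.succs, Set.mem_singleton_iff] at hd
      subst hd
      exact Or.inl (by
        simp only [conts, Set.mem_insert_iff, Set.mem_union]
        exact Or.inr (Or.inl (self_mem_conts _ _)))
    · rcases ih1 hp1 (.pe e2 k) c hc1 hd with h | h
      · exact Or.inl (by
          simp only [conts, Set.mem_insert_iff, Set.mem_union]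
          exact Or.inr (Or.inl h))
      · simp only [triple, Set.mem_insert_iff, Set.mem_singleton_iff] at h
        rcases h with rfl | rfl | rfl
        · exact Or.inr (by simp [triple])
        · exact Or.inr (by simp [triple])
        · exact Or.inl (by
            simp only [conts, Set.mem_insert_iff, Set.mem_union]
            exact Or.inr (Or.inr (self_mem_conts _ _)))
    · rcases ih2 hp2 k c hc2 hd with h | h
      · exact Or.inl (by
          simp only [conts, Set.mem_insert_iff, Set.mem_union]
          exact Or.inr (Or.inr h))
      · exact Or.inr h
  | cho e1 e2 ih1 ih2 =>
    intro hp k c hc d hd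
    obtain ⟨hp1, hp2⟩ := hp
    simp only [conts, Set.mem_insert_iff, Set.mem_union] at hc
    rcases hc with rfl | (hc1 | hc1') | hc2
    · simp only [instr, Instr.succs, Set.mem_insert_iff, Set.mem_singleton_iff] at hd
      rcases hd with rfl | rfl | rfl
      · exact Or.inl (by
          simp only [conts, Set.mem_insert_iff, Set.mem_union]
          exact Or.inr (Or.inl (Or.inl (self_mem_conts _ _))))
      · exact Or.inl (by
          simp only [conts, Set.mem_insert_iff, Set.mem_union]
          exact Or.inr (Or.inl (Or.inr (self_mem_conts _ _))))
      · exact Or.inl (by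
          simp only [conts, Set.mem_insert_iff, Set.mem_union]
          exact Or.inr (Or.inr (self_mem_conts _ _)))
    · rcases ih1 hp1 .acc c hc1 hd with h | h
      · exact Or.inl (by
          simp only [conts, Set.mem_insert_iff, Set.mem_union]
          exact Or.inr (Or.inl (Or.inl h)))
      · simp only [triple, Set.mem_insert_iff, Set.mem_singleton_iff] at h
        rcases h with rfl | rfl | rfl <;> exact Or.inr (by simp [triple])
    · rcases ih1 hp1 k c hc1' hd with h | h
      · exact Or.inl (by
          simp only [conts, Set.mem_insert_iff, Set.mem_union]
          exact Or.inr (Or.inl (Or.inr h)))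
      · exact Or.inr h
    · rcases ih2 hp2 k c hc2 hd with h | h
      · exact Or.inl (by
          simp only [conts, Set.mem_insert_iff, Set.mem_union]
          exact Or.inr (Or.inr h))
      · exact Or.inr h
  | star e ih =>
    intro hp k c hc d hd
    simp only [conts, Set.mem_insert_iff, Set.mem_union] at hc
    rcases hc with rfl | hc1 | hc2
    · simp only [instr, Instr.succs, Set.mem_insert_iff, Set.mem_singleton_iff] at hd
      rcases hd with rfl | rfl | rfl
      · exact Or.inl (by
          simp only [conts, Set.mem_insert_iff, Set.mem_union]
          exact Or.inr (Or.inl (self_mem_conts _ _)))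
      · exact Or.inl (by
          simp only [conts, Set.mem_insert_iff, Set.mem_union]
          exact Or.inr (Or.inr (self_mem_conts _ _)))
      · exact Or.inr (by simp [triple])
    · rcases ih hp .acc c hc1 hd with h | h
      · exact Or.inl (by
          simp only [conts, Set.mem_insert_iff, Set.mem_union]
          exact Or.inr (Or.inl h))
      · simp only [triple, Set.mem_insert_iff, Set.mem_singleton_iff] at h
        rcases h with rfl | rfl | rfl <;> exact Or.inr (by simp [triple])
    · rcases ih hp (.pe (.star e) k) c hc2 hd with h | h
      · exact Or.inl (by
          simp only [conts, Set.mem_insert_iff, Set.mem_union]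
          exact Or.inr (Or.inr h))
      · simp only [triple, Set.mem_insert_iff, Set.mem_singleton_iff] at h
        rcases h with rfl | rfl | rfl
        · exact Or.inr (by simp [triple])
        · exact Or.inr (by simp [triple])
        · exact Or.inl (by simp [conts])
  | npred e ih =>
    intro hp k c hc d hd
    simp only [conts, Set.mem_insert_iff] at hc
    rcases hc with rfl | hc1
    · simp only [instr, Instr.succs, Set.mem_insert_iff, Set.mem_singleton_iff] at hd
      rcases hd with rfl | rfl | rfl
      · exact Or.inl (by
          simp only [conts, Set.mem_insert_iff]
          exact Or.inr (self_mem_conts _ _))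
      · exact Or.inr (by simp [triple])
      · exact Or.inr (by simp [triple])
    · rcases ih hp .acc c hc1 hd with h | h
      · exact Or.inl (by
          simp only [conts, Set.mem_insert_iff]
          exact Or.inr h)
      · simp only [triple, Set.mem_insert_iff, Set.mem_singleton_iff] at h
        rcases h with rfl | rfl | rfl <;> exact Or.inr (by simp [triple])
  | opt e ih => intro hp; exact hp.elim
  | apred e ih => intro hp; exact hp.elim
  | plus e ih => intro hp; exact hp.elim
  | nt A => intro hp; exact hp.elim



def ntSet (P : ℕ → PExp α) (n : ℕ) : Set (Code α) :=
  ⋃ A ∈ Finset.range n, {Code.pe (P A) Code.acc}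

theorem mem_ntSet {P : ℕ → PExp α} {n A : ℕ} (hA : A < n) :
    Code.pe (P A) Code.acc ∈ ntSet P n := by
  simp only [ntSet, Set.mem_iUnion, Set.mem_singleton_iff]
  exact ⟨A, Finset.mem_range.mpr hA, rfl⟩

theorem linear_closed {P : ℕ → PExp α} {n : ℕ} :
    ∀ (e : PExp α), Linear e → NTBound n e → ∀ c ∈ conts e Code.acc,
      (instr P c).succs ⊆
        conts e Code.acc ∪ (insert Code.acc (insert Code.rej (ntSet P n))) := by
  intro e he
  induction he with
  | @base p hp =>
    intro _ c hc d hd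
    rcases nfree_closed p hp Code.acc c hc hd with h | h
    · exact Or.inl h
    · simp only [triple, Set.mem_insert_iff, Set.mem_singleton_iff] at h
      rcases h with rfl | rfl | rfl <;> exact Or.inr (by simp)
  | @pnt p A hp =>
    intro hb c hc d hd
    have hA : A < n := hb.2
    simp only [conts, Set.mem_insert_iff, Set.mem_union, Set.mem_singleton_iff] at hc
    rcases hc with rfl | hc1 | hc2
    · simp only [instr, Instr.succs, Set.mem_singleton_iff] at hd
      subst hd
      exact Or.inl (by
        simp only [conts, Set.mem_insert_iff, Set.mem_union]
        exact Or.inr (Or.inl (self_mem_conts _ _)))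
    · rcases nfree_closed p hp (.pe (.nt A) Code.acc) c hc1 hd with h | h
      · exact Or.inl (by
          simp only [conts, Set.mem_insert_iff, Set.mem_union]
          exact Or.inr (Or.inl h))
      · simp only [triple, Set.mem_insert_iff, Set.mem_singleton_iff] at h
        rcases h with rfl | rfl | rfl
        · exact Or.inr (by simp)
        · exact Or.inr (by simp)
        · exact Or.inl (by simp [conts])
    · subst hc2
      simp only [instr, Instr.succs, Set.mem_singleton_iff] at hd
      subst hd
      exact Or.inr (by
        simp only [Set.mem_insert_iff]
        exact Or.inr (Or.inr (mem_ntSet hA)))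
  | @pseq p e2 hp hlin ih =>
    intro hb c hc d hd
    have hb2 : NTBound n e2 := hb.2
    simp only [conts, Set.mem_insert_iff, Set.mem_union] at hc
    rcases hc with rfl | hc1 | hc2
    · simp only [instr, Instr.succs, Set.mem_singleton_iff] at hd
      subst hd
      exact Or.inl (by
        simp only [conts, Set.mem_insert_iff, Set.mem_union]
        exact Or.inr (Or.inl (self_mem_conts _ _)))
    · rcases nfree_closed p hp (.pe e2 Code.acc) c hc1 hd with h | h
      · exact Or.inl (by
          simp only [conts, Set.mem_insert_iff, Set.mem_union]
          exact Or.inr (Or.inl h))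
      · simp only [triple, Set.mem_insert_iff, Set.mem_singleton_iff] at h
        rcases h with rfl | rfl | rfl
        · exact Or.inr (by simp)
        · exact Or.inr (by simp)
        · exact Or.inl (by
            simp only [conts, Set.mem_insert_iff, Set.mem_union]
            exact Or.inr (Or.inr (self_mem_conts _ _)))
    · rcases ih hb2 c hc2 hd with h | h
      · exact Or.inl (by
          simp only [conts, Set.mem_insert_iff, Set.mem_union]
          exact Or.inr (Or.inr h))
      · exact Or.inr h
  | @cho e1 e2 h1 h2 ih1 ih2 =>
    intro hb c hc d hd
    simp only [conts, Set.mem_insert_iff, Set.mem_union] at hc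
    rcases hc with rfl | (hc1 | hc1') | hc2
    · simp only [instr, Instr.succs, Set.mem_insert_iff, Set.mem_singleton_iff] at hd
      rcases hd with rfl | rfl | rfl
      · exact Or.inl (by
          simp only [conts, Set.mem_insert_iff, Set.mem_union]
          exact Or.inr (Or.inl (Or.inl (self_mem_conts _ _))))
      · exact Or.inl (by
          simp only [conts, Set.mem_insert_iff, Set.mem_union]
          exact Or.inr (Or.inl (Or.inr (self_mem_conts _ _))))
      · exact Or.inl (by
          simp only [conts, Set.mem_insert_iff, Set.mem_union]
          exact Or.inr (Or.inr (self_mem_conts _ _)))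
    · rcases ih1 hb.1 c hc1 hd with h | h
      · exact Or.inl (by
          simp only [conts, Set.mem_insert_iff, Set.mem_union]
          exact Or.inr (Or.inl (Or.inl h)))
      · exact Or.inr h
    · rcases ih1 hb.1 c hc1' hd with h | h
      · exact Or.inl (by
          simp only [conts, Set.mem_insert_iff, Set.mem_union]
          exact Or.inr (Or.inl (Or.inl h)))
      · exact Or.inr h
    · rcases ih2 hb.2 c hc2 hd with h | h
      · exact Or.inl (by
          simp only [conts, Set.mem_insert_iff, Set.mem_union]
          exact Or.inr (Or.inr h))
      · exact Or.inr h
  | @notseq e1 e2 h1 h2 ih1 ih2 =>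
    intro hb c hc d hd
    have hb1 : NTBound n e1 := hb.1
    have hb2 : NTBound n e2 := hb.2
    simp only [conts, Set.mem_insert_iff, Set.mem_union] at hc
    rcases hc with rfl | (rfl | hc1) | hc2
    · simp only [instr, Instr.succs, Set.mem_singleton_iff] at hd
      subst hd
      exact Or.inl (by simp [conts])
    · simp only [instr, Instr.succs, Set.mem_insert_iff, Set.mem_singleton_iff] at hd
      rcases hd with rfl | rfl | rfl
      · exact Or.inl (by
          simp only [conts, Set.mem_insert_iff, Set.mem_union]
          exact Or.inr (Or.inl (Or.inr (self_mem_conts _ _))))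
      · exact Or.inr (by simp)
      · exact Or.inl (by
          simp only [conts, Set.mem_insert_iff, Set.mem_union]
          exact Or.inr (Or.inr (self_mem_conts _ _)))
    · rcases ih1 hb1 c hc1 hd with h | h
      · exact Or.inl (by
          simp only [conts, Set.mem_insert_iff, Set.mem_union]
          exact Or.inr (Or.inl (Or.inr h)))
      · exact Or.inr h
    · rcases ih2 hb2 c hc2 hd with h | h
      · exact Or.inl (by
          simp only [conts, Set.mem_insert_iff, Set.mem_union]
          exact Or.inr (Or.inr h))
      · exact Or.inr h



theorem lpeg_lang_regular (G : LPEG α) :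
    ∃ (σ : Type) (_ : Fintype σ) (D : DFA α σ), (D.accepts : Set (List α)) = G.Lang := by
  classical
  obtain ⟨hs, hbs, hprod⟩ := G.isLPEG
  set P : ℕ → PExp α := G.toPEGG.P with hP
  set n : ℕ := G.toPEGG.n with hn
  set st : PExp α := G.toPEGG.start with hst
  set T : Set (Code α) := insert Code.acc (insert Code.rej
    (conts st Code.acc ∪ ⋃ A ∈ Finset.range n, conts (P A) Code.acc)) with hT
  have hfin : T.Finite := by
    refine Set.Finite.insert _ (Set.Finite.insert _ (Set.Finite.union (conts_finite _ _) ?_))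
    exact Set.Finite.biUnion (Finset.range n).finite_toSet fun A _ => conts_finite _ _
  have hsub1 : conts st Code.acc ⊆ T := fun d hd => by
    simp only [hT, Set.mem_insert_iff, Set.mem_union]
    exact Or.inr (Or.inr (Or.inl hd))
  have hsub2 : ∀ A, A < n → conts (P A) Code.acc ⊆ T := fun A hA d hd => by
    simp only [hT, Set.mem_insert_iff, Set.mem_union, Set.mem_iUnion]
    exact Or.inr (Or.inr (Or.inr ⟨A, Finset.mem_range.mpr hA, hd⟩))
  have hmap : ∀ (e : PExp α), conts e Code.acc ⊆ T →
      (conts e Code.acc ∪ insert Code.acc (insert Code.rej (ntSet P n))) ⊆ T := by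
    intro e hce d hd
    rcases hd with hd | hd
    · exact hce hd
    · simp only [Set.mem_insert_iff] at hd
      rcases hd with rfl | rfl | hd
      · simp [hT]
      · simp [hT]
      · simp only [ntSet, Set.mem_iUnion, Set.mem_singleton_iff] at hd
        obtain ⟨A, hA, rfl⟩ := hd
        exact hsub2 A (Finset.mem_range.mp hA) (self_mem_conts _ _)
  have hcl : ∀ c ∈ T, (instr P c).succs ⊆ T := by
    intro c hc
    simp only [hT, Set.mem_insert_iff, Set.mem_union, Set.mem_iUnion] at hc
    rcases hc with rfl | rfl | hc | ⟨A, hA, hc⟩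
    · intro d hd; simp [instr, Instr.succs] at hd
    · intro d hd; simp [instr, Instr.succs] at hd
    · exact fun d hd => hmap st hsub1 (linear_closed st hs hbs c hc hd)
    · have hA' : A < n := Finset.mem_range.mp hA
      exact fun d hd => hmap (P A) (hsub2 A hA')
        (linear_closed (P A) (hprod A hA').1 (hprod A hA').2 c hc hd)
  have hq0 : Code.pe st Code.acc ∈ T := hsub1 (self_mem_conts _ _)
  obtain ⟨σ, inst, D, hD⟩ := machine_regular (instr P) T hfin hcl _ hq0
  refine ⟨σ, inst, D, ?_⟩
  rw [hD]
  ext w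
  simp only [Set.mem_setOf_eq, LPEG.Lang, PEGG.Lang, PLang]
  constructor
  · intro h
    obtain ⟨x, w', hw, hc, -⟩ := complete h
    exact ⟨x, hc⟩
  · rintro ⟨y, hy⟩
    obtain ⟨w', hw⟩ := consume_prefix hy rfl
    exact (sound hy Code.acc).1 y w' true rfl hw (.acc rfl)



section Dir1

variable {σ : Type}

def dbody (dstep : σ → α → σ) (enc : σ → ℕ) (accb : σ → Bool) (alpha : List α) (q : σ) :
    PExp α :=
  List.foldr (fun a e => PExp.cho (PExp.seq (PExp.chr a) (PExp.nt (enc (dstep q a)))) e)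
    (if accb q then PExp.npred PExp.anyc else PExp.npred PExp.eps) alpha

theorem dbody_linear (dstep : σ → α → σ) (enc : σ → ℕ) (accb : σ → Bool) :
    ∀ (alpha : List α) (q : σ), Linear (dbody dstep enc accb alpha q) := by
  intro alpha q
  induction alpha with
  | nil =>
    show Linear (if accb q then PExp.npred PExp.anyc else PExp.npred PExp.eps)
    split
    · exact Linear.base trivial
    · exact Linear.base trivial
  | cons a l ih => exact Linear.cho (Linear.pnt _ trivial) ih

theorem dbody_ntbound {n : ℕ} (dstep : σ → α → σ) (enc : σ → ℕ) (accb : σ → Bool)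
    (henc : ∀ s : σ, enc s < n) :
    ∀ (alpha : List α) (q : σ), NTBound n (dbody dstep enc accb alpha q) := by
  intro alpha q
  induction alpha with
  | nil =>
    show NTBound n (if accb q then PExp.npred PExp.anyc else PExp.npred PExp.eps)
    split
    · trivial
    · trivial
  | cons a l ih => exact ⟨⟨trivial, henc _⟩, ih⟩

theorem dfa_fwd {P : ℕ → PExp α} (dstep : σ → α → σ) (enc : σ → ℕ) (accb : σ → Bool)
    (alpha : List α) (halpha : ∀ a : α, a ∈ alpha)
    (hP : ∀ q, P (enc q) = dbody dstep enc accb alpha q) :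
    ∀ (w : List α) (q : σ), accb (List.foldl dstep q w) = true →
      ∃ y, Consume P (.nt (enc q)) w (some y) := by
  intro w
  induction w with
  | nil =>
    intro q hq
    simp only [List.foldl_nil] at hq
    refine ⟨[], Consume.nt ?_⟩
    rw [hP q]
    have main : ∀ l : List α, Consume P (dbody dstep enc accb l q) [] (some []) := by
      intro l
      induction l with
      | nil =>
        show Consume P (if accb q then PExp.npred PExp.anyc else PExp.npred PExp.eps) [] (some [])
        rw [if_pos hq]
        exact Consume.not_ok Consume.any_fail
      | cons b l ihl =>
        exact Consume.cho2 (Consume.seq_fail1 (Consume.chr_fail_nil b)) ihl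
    exact main alpha
  | cons a w ihw =>
    intro q hq
    rw [List.foldl_cons] at hq
    obtain ⟨y, hy⟩ := ihw (dstep q a) hq
    have main : ∀ l : List α, a ∈ l →
        ∃ z, Consume P (dbody dstep enc accb l q) (a :: w) (some z) := by
      intro l hl
      induction l with
      | nil => cases hl
      | cons b l ihl =>
        by_cases hba : b = a
        · subst hba
          exact ⟨[b] ++ y, Consume.cho1
            (show Consume P ((PExp.chr b).seq (PExp.nt (enc (dstep q b)))) ([b] ++ w)
                (some ([b] ++ y)) from Consume.seq_ok (Consume.chr_ok b w) hy)⟩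
        · have hl' : a ∈ l := (List.mem_cons.mp hl).resolve_left fun h => hba h.symm
          obtain ⟨z, hz⟩ := ihl hl'
          exact ⟨z, Consume.cho2
            (Consume.seq_fail1 (Consume.chr_fail w hba)) hz⟩
    obtain ⟨z, hz⟩ := main alpha (halpha a)
    exact ⟨z, Consume.nt (by rw [hP q]; exact hz)⟩

theorem dfa_bwd {P : ℕ → PExp α} (dstep : σ → α → σ) (enc : σ → ℕ) (accb : σ → Bool)
    (alpha : List α) (hP : ∀ q, P (enc q) = dbody dstep enc accb alpha q) :
    ∀ (m : ℕ) (w : List α), w.length < m → ∀ (q : σ) (y : List α),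
      Consume P (.nt (enc q)) w (some y) → accb (List.foldl dstep q w) = true := by
  intro m
  induction m with
  | zero => intro w hw q y h; exact absurd hw (Nat.not_lt_zero _)
  | succ m ihm =>
    intro w hw q y h
    cases h with
    | nt hbody =>
      rw [hP q] at hbody
      have main : ∀ l : List α, Consume P (dbody dstep enc accb l q) w (some y) →
          accb (List.foldl dstep q w) = true := by
        intro l
        induction l with
        | nil =>
          intro hb
          show accb (List.foldl dstep q w) = true
          by_cases hacc : accb q = true
          · rw [show dbody dstep enc accb [] q =
                (if accb q then PExp.npred PExp.anyc else PExp.npred PExp.eps) from rfl,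
              if_pos hacc] at hb
            cases hb with
            | not_ok hfail =>
              cases hfail with
              | any_fail => simp only [List.foldl_nil]; exact hacc
          · rw [show dbody dstep enc accb [] q =
                (if accb q then PExp.npred PExp.anyc else PExp.npred PExp.eps) from rfl,
              if_neg hacc] at hb
            cases hb with
            | not_ok hfail => cases hfail
        | cons b l ihl =>
          intro hb
          cases hb with
          | cho1 hseq =>
            cases hseq with
            | @seq_ok _ _ x y2 w' h1 h2 =>
              generalize hxw : x ++ w' = ww at h1
              cases h1 with
              | chr_ok =>
                rename_i w3
                have hww : w' = w3 := by
                  have hcc : b :: w' = b :: w3 := hxw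
                  injection hcc
                subst hww
                have hlen : w'.length < m := by simp at hw; omega
                exact ihm w' hlen (dstep q b) y2 h2
          | cho2 hfail hrest => exact ihl hrest
      exact main alpha hbody

theorem dfa_to_lpeg [Fintype α] [Fintype σ] (D : DFA α σ) :
    ∃ G : LPEG α, G.Lang = (D.accepts : Set (List α)) := by
  classical
  set n := Fintype.card σ with hn
  set eqv : σ ≃ Fin n := Fintype.equivFin σ with heqv
  set enc : σ → ℕ := fun q => (eqv q : ℕ) with henc
  set accb : σ → Bool := fun q => decide (q ∈ D.accept) with haccb
  set alpha : List α := Finset.univ.toList with halphadef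
  set P : ℕ → PExp α :=
    fun A => if h : A < n then dbody D.step enc accb alpha (eqv.symm ⟨A, h⟩) else PExp.eps
    with hPdef
  have halpha : ∀ a : α, a ∈ alpha := fun a => Finset.mem_toList.mpr (Finset.mem_univ a)
  have hencn : ∀ s : σ, enc s < n := fun s => (eqv s).isLt
  have hP : ∀ q, P (enc q) = dbody D.step enc accb alpha q := by
    intro q
    have hlt : enc q < n := hencn q
    simp only [hPdef, dif_pos hlt]
    have hfin : (⟨enc q, hlt⟩ : Fin n) = eqv q := Fin.eta _ _
    rw [hfin, Equiv.symm_apply_apply]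
  have hisl : (⟨n, P, PExp.seq PExp.eps (PExp.nt (enc D.start))⟩ : PEGG α).IsLPEG := by
    refine ⟨Linear.pnt _ trivial, ⟨trivial, hencn D.start⟩, ?_⟩
    intro A hA
    show Linear (P A) ∧ NTBound n (P A)
    have hPA : P A = dbody D.step enc accb alpha (eqv.symm ⟨A, hA⟩) := by
      simp only [hPdef, dif_pos hA]
    rw [hPA]
    exact ⟨dbody_linear _ _ _ _ _, dbody_ntbound _ _ _ hencn _ _⟩
  refine ⟨⟨⟨n, P, PExp.seq PExp.eps (PExp.nt (enc D.start))⟩, hisl⟩, ?_⟩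
  ext w
  simp only [LPEG.Lang, PEGG.Lang, PLang, Set.mem_setOf_eq]
  constructor
  · rintro ⟨y, hy⟩
    cases hy with
    | @seq_ok _ _ x y2 w' h1 h2 =>
      cases h1 with
      | eps =>
        have hacc := dfa_bwd D.step enc accb alpha hP (w'.length + 1) w'
          (Nat.lt_succ_self _) D.start y2 h2
        show List.foldl D.step D.start ([] ++ w') ∈ D.accept
        rw [List.nil_append]
        rw [haccb] at hacc
        exact of_decide_eq_true hacc
  · intro hw
    have hacc : accb (List.foldl D.step D.start w) = true := by
      simp only [haccb]
      exact decide_eq_true hw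
    obtain ⟨y, hy⟩ := dfa_fwd D.step enc accb alpha halpha hP w D.start hacc
    have hc : Consume P (PExp.eps.seq (PExp.nt (enc D.start))) ([] ++ w) (some ([] ++ y)) :=
      Consume.seq_ok (Consume.eps w) hy
    exact ⟨y, hc⟩

end Dir1

end LPEGAux

/-- the class of LPEG languages is exactly the class of regular
(DFA-recognizable) languages. -/
theorem lpeg_languages_eq_regular [Fintype α] :
    { L : Set (List α) | ∃ G : LPEG α, G.Lang = L } =
      { L : Set (List α) |
        ∃ (σ : Type) (_ : Fintype σ) (D : DFA α σ), (D.accepts : Set (List α)) = L } := by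
  letI : DecidableEq α := Classical.decEq α
  ext L
  simp only [Set.mem_setOf_eq]
  constructor
  · rintro ⟨G, rfl⟩
    exact LPEGAux.lpeg_lang_regular G
  · rintro ⟨σ, instσ, D, rfl⟩
    letI : Fintype σ := instσ
    exact LPEGAux.dfa_to_lpeg D
end

section
/- For every regular expression r, the PEG Π(r, G0) produced by the continuation-based translation Π starting from the empty continuation grammar G0 = ({}, Σ, {}, ε) is an LPEG (its start expression and all production bodies are linear parsing expressions). -/
variable {α : Type}

lemma ntbound_mono {m n : ℕ} (h : m ≤ n) : ∀ {e : PExp α}, NTBound m e → NTBound n e := by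
  intro e
  induction e <;> simp_all [NTBound] <;> omega

lemma pitr_n_le (r : Regex α) (G : PEGG α) : G.n ≤ (pitr r G).n := by
  induction r generalizing G with
  | eps => exact le_refl _
  | chr a => exact le_refl _
  | cat r1 r2 ih1 ih2 => exact (ih2 G).trans (ih1 _)
  | alt r1 r2 ih1 ih2 =>
      simp only [pitr]
      exact (ih1 G).trans (ih2 ⟨(pitr r1 G).n, (pitr r1 G).P, G.start⟩)
  | star r ih =>
      simp only [pitr]
      exact le_trans (Nat.le_succ G.n) (ih ⟨G.n + 1, G.P, PExp.seq PExp.eps (PExp.nt G.n)⟩)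

lemma pitr_P_eq (r : Regex α) (G : PEGG α) {A : ℕ} (h : A < G.n) :
    (pitr r G).P A = G.P A := by
  induction r generalizing G with
  | eps => rfl
  | chr a => rfl
  | cat r1 r2 ih1 ih2 =>
      rw [show pitr (.cat r1 r2) G = pitr r1 (pitr r2 G) from rfl,
        ih1 _ (lt_of_lt_of_le h (pitr_n_le r2 G)), ih2 _ h]
  | alt r1 r2 ih1 ih2 =>
      show (pitr r2 ⟨(pitr r1 G).n, (pitr r1 G).P, G.start⟩).P A = G.P A
      rw [ih2 (⟨(pitr r1 G).n, (pitr r1 G).P, G.start⟩ : PEGG α)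
        (lt_of_lt_of_le h (pitr_n_le r1 G)), ih1 G h]
  | star r ih =>
      show Function.update (pitr r ⟨G.n + 1, G.P, _⟩).P G.n _ A = G.P A
      rw [Function.update_of_ne (Nat.ne_of_lt h),
        ih (⟨G.n + 1, G.P, PExp.seq PExp.eps (PExp.nt G.n)⟩ : PEGG α) (Nat.lt_succ_of_lt h)]

lemma pitr_key (r : Regex α) (G : PEGG α) (hs : Linear G.start)
    (hb : NTBound G.n G.start) :
    Linear (pitr r G).start ∧ NTBound (pitr r G).n (pitr r G).start ∧
      ∀ A, G.n ≤ A → A < (pitr r G).n →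
        Linear ((pitr r G).P A) ∧ NTBound (pitr r G).n ((pitr r G).P A) := by
  induction r generalizing G with
  | eps => exact ⟨hs, hb, fun A h1 h2 => absurd (lt_of_le_of_lt h1 h2) (lt_irrefl _)⟩
  | chr a =>
      exact ⟨Linear.pseq trivial hs, ⟨trivial, hb⟩,
        fun A h1 h2 => absurd (lt_of_le_of_lt h1 h2) (lt_irrefl _)⟩
  | cat r1 r2 ih1 ih2 =>
      obtain ⟨l2, b2, p2⟩ := ih2 G hs hb
      obtain ⟨l1, b1, p1⟩ := ih1 (pitr r2 G) l2 b2
      refine ⟨l1, b1, fun A h1 h2 => ?_⟩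
      by_cases hA : A < (pitr r2 G).n
      · have := p2 A h1 hA
        rw [show pitr (.cat r1 r2) G = pitr r1 (pitr r2 G) from rfl, pitr_P_eq r1 _ hA]
        exact ⟨this.1, ntbound_mono (pitr_n_le r1 _) this.2⟩
      · exact p1 A (le_of_not_gt hA) h2
  | alt r1 r2 ih1 ih2 =>
      obtain ⟨l1, b1, p1⟩ := ih1 G hs hb
      set G1 := pitr r1 G with hG1
      have hle1 : G.n ≤ G1.n := pitr_n_le r1 G
      obtain ⟨l2, b2, p2⟩ := ih2 (⟨G1.n, G1.P, G.start⟩ : PEGG α) hs (ntbound_mono hle1 hb)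
      set G2 := pitr r2 (⟨G1.n, G1.P, G.start⟩ : PEGG α) with hG2
      have hle2 : G1.n ≤ G2.n := by rw [hG2]; exact pitr_n_le r2 (⟨G1.n, G1.P, G.start⟩ : PEGG α)
      refine ⟨Linear.cho l1 l2, ⟨ntbound_mono hle2 b1, b2⟩, fun A h1 h2 => ?_⟩
      by_cases hA : A < G1.n
      · have hP : G2.P A = G1.P A := pitr_P_eq r2 (⟨G1.n, G1.P, G.start⟩ : PEGG α) hA
        have := p1 A h1 hA
        exact ⟨hP ▸ this.1, hP ▸ ntbound_mono hle2 this.2⟩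
      · exact p2 A (le_of_not_gt hA) h2
  | star r ih =>
      have hlin : Linear (PExp.seq (PExp.eps : PExp α) (PExp.nt G.n)) := Linear.pnt G.n trivial
      obtain ⟨l1, b1, p1⟩ := ih (⟨G.n + 1, G.P, PExp.seq PExp.eps (PExp.nt G.n)⟩ : PEGG α)
        hlin ⟨trivial, Nat.lt_succ_self _⟩
      set G1 := pitr r (⟨G.n + 1, G.P, PExp.seq PExp.eps (PExp.nt G.n)⟩ : PEGG α) with hG1
      have hle : G.n + 1 ≤ G1.n := by rw [hG1]; exact pitr_n_le r (⟨G.n + 1, G.P, PExp.seq PExp.eps (PExp.nt G.n)⟩ : PEGG α)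
      refine ⟨hlin, ⟨trivial, lt_of_lt_of_le (Nat.lt_succ_self _) hle⟩, fun A h1 h2 => ?_⟩
      show Linear (Function.update G1.P G.n (PExp.cho G1.start G.start) A) ∧
        NTBound G1.n (Function.update G1.P G.n (PExp.cho G1.start G.start) A)
      by_cases hA : A = G.n
      · subst hA
        rw [Function.update_self]
        exact ⟨Linear.cho l1 hs, b1, ntbound_mono ((Nat.le_succ _).trans hle) hb⟩
      · rw [Function.update_of_ne hA]
        exact p1 A (show G.n + 1 ≤ A by omega) h2

/-- the continuation-based translation Π applied to any regular
expression and the empty continuation grammar `G₀ = ({},Σ,{},ε)` yields an LPEG. -/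
theorem pi_translation_is_lpeg (r : Regex α) :
    (pitr r ⟨0, fun _ => PExp.eps, PExp.eps⟩).IsLPEG := by
  obtain ⟨l, b, p⟩ := pitr_key r (⟨0, fun _ => PExp.eps, PExp.eps⟩ : PEGG α)
    (Linear.base trivial) trivial
  exact ⟨l, b, fun A hA => p A (Nat.zero_le _) hA⟩
end
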